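/- Let a : (0,∞) → [0,∞) be measurable and let b be a daughter distribution function. Then for every measurable f : (0,∞) → [0,∞) with ∫₀^∞ a(y) y f(y) dy < ∞, one has ∫₀^∞ x (Ff)(x) dx = 0 (the fragmentation operator conserves mass). -/

import Mathlib

/-!
In `∫ x (Ff)(x) dx` the loss term is `∫ a(y) y f(y) dy`, and by Tonelli on the triangle
`0 < x < y` the gain term is `∫ a(y) f(y) (∫₀^y x b(x,y) dx) dy`, which is the same number by the
mass condition on `b`. Computing in `ℝ≥0∞` makes the exchange of integrals unconditional; the
common value is finite by assumption, so both terms are integrable and cancel.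
-/

open MeasureTheory Set Filter
open scoped ENNReal

/-- The fragmentation operator `(Ff)(x) = −a(x) f(x) + ∫ₓ^∞ a(y) b(x,y) f(y) dy`. -/
noncomputable def fragOp (a : ℝ → ℝ) (b : ℝ → ℝ → ℝ) (f : ℝ → ℝ) (x : ℝ) : ℝ :=
  -(a x * f x) + ∫ y in Set.Ioi x, a y * b x y * f y

section

variable {α : Type*} [MeasurableSpace α] {μ : Measure α}

/-- `c ≠ 0` excludes the junk value `0` that the Bochner integral gives non-integrable functions. -/
theorem lintegral_ofReal_eq_ofReal_of_integral_eq {φ : α → ℝ} {c : ℝ} (hφ : 0 ≤ᵐ[μ] φ)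
    (hc : c ≠ 0) (h : ∫ x, φ x ∂μ = c) : ∫⁻ x, ENNReal.ofReal (φ x) ∂μ = ENNReal.ofReal c := by
  rw [← h, ofReal_integral_eq_lintegral_ofReal (Integrable.of_integral_ne_zero (h ▸ hc)) hφ]

theorem integral_toReal_sub_toReal_eq_zero {g h : α → ℝ≥0∞} (hg : AEMeasurable g μ)
    (hh : AEMeasurable h μ) (hgh : ∫⁻ x, g x ∂μ = ∫⁻ x, h x ∂μ) (hfin : ∫⁻ x, h x ∂μ ≠ ∞) :
    ∫ x, ((g x).toReal - (h x).toReal) ∂μ = 0 := by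
  have hfin' : ∫⁻ x, g x ∂μ ≠ ∞ := hgh ▸ hfin
  rw [integral_sub (integrable_toReal_of_lintegral_ne_top hg hfin')
      (integrable_toReal_of_lintegral_ne_top hh hfin),
    integral_toReal hg (ae_lt_top' hg hfin'), integral_toReal hh (ae_lt_top' hh hfin), hgh,
    sub_self]

end

theorem measurable_lintegral_Ioi {g : ℝ → ℝ → ℝ≥0∞} (hg : Measurable (Function.uncurry g)) :
    Measurable fun x => ∫⁻ y in Ioi x, g x y := by
  have hind : Measurable ({p : ℝ × ℝ | p.1 < p.2}.indicator (Function.uncurry g)) :=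
    hg.indicator (measurableSet_lt measurable_fst measurable_snd)
  convert hind.lintegral_prod_right' (ν := volume) using 2 with x
  rw [← lintegral_indicator measurableSet_Ioi]
  rfl

theorem lintegral_Ioi_lintegral_Ioi_swap (c : ℝ) {g : ℝ → ℝ → ℝ≥0∞}
    (hg : Measurable (Function.uncurry g)) :
    ∫⁻ x in Ioi c, ∫⁻ y in Ioi x, g x y = ∫⁻ y in Ioi c, ∫⁻ x in Ioo c y, g x y := by
  set k : ℝ → ℝ → ℝ≥0∞ := fun x y => if c < x ∧ x < y then g x y else 0
  have hk : Measurable (Function.uncurry k) :=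
    hg.ite ((measurableSet_lt measurable_const measurable_fst).inter
      (measurableSet_lt measurable_fst measurable_snd)) measurable_const
  have hleft : ∫⁻ x in Ioi c, ∫⁻ y in Ioi x, g x y = ∫⁻ x, ∫⁻ y, k x y := by
    rw [← lintegral_indicator measurableSet_Ioi]
    refine lintegral_congr fun x => ?_
    by_cases hx : c < x
    · rw [indicator_of_mem (mem_Ioi.2 hx), ← lintegral_indicator measurableSet_Ioi]
      congr 1 with y
      by_cases hy : x < y <;> simp [k, hx, hy]
    · simp [k, hx]
  have hright : ∫⁻ y in Ioi c, ∫⁻ x in Ioo c y, g x y = ∫⁻ y, ∫⁻ x, k x y := by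
    rw [← lintegral_indicator measurableSet_Ioi]
    refine lintegral_congr fun y => ?_
    by_cases hy : c < y
    · rw [indicator_of_mem (mem_Ioi.2 hy), ← lintegral_indicator measurableSet_Ioo]
      congr 1 with x
      by_cases hx : c < x ∧ x < y <;> simp [k, hx]
    · have : ∀ x, ¬(c < x ∧ x < y) := fun x hx => hy (hx.1.trans hx.2)
      simp [k, hy, this]
  rw [hleft, hright, lintegral_lintegral_swap hk.aemeasurable]

theorem lintegral_mul_lintegral_Ioi_of_mass {b : ℝ → ℝ → ℝ} {w : ℝ → ℝ}
    (hb_meas : Measurable (Function.uncurry b)) (hb_nonneg : ∀ x y, 0 ≤ b x y)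
    (hb_mass : ∀ y : ℝ, 0 < y → ∫ x in Ioo 0 y, x * b x y = y) (hw : Measurable w) :
    ∫⁻ x in Ioi 0, ENNReal.ofReal x * ∫⁻ y in Ioi x, ENNReal.ofReal (b x y * w y)
      = ∫⁻ y in Ioi 0, ENNReal.ofReal (y * w y) := by
  set g : ℝ → ℝ → ℝ≥0∞ := fun x y => ENNReal.ofReal (x * b x y) * ENNReal.ofReal (w y)
  have hg : Measurable (Function.uncurry g) :=
    (measurable_fst.mul hb_meas).ennreal_ofReal.mul (hw.comp measurable_snd).ennreal_ofReal
  have hmass : ∀ y : ℝ, 0 < y → ∫⁻ x in Ioo 0 y, ENNReal.ofReal (x * b x y) = ENNReal.ofReal y :=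
    fun y hy => lintegral_ofReal_eq_ofReal_of_integral_eq
      ((ae_restrict_iff' measurableSet_Ioo).2 (ae_of_all _ fun x hx =>
        mul_nonneg hx.1.le (hb_nonneg x y))) hy.ne' (hb_mass y hy)
  calc ∫⁻ x in Ioi 0, ENNReal.ofReal x * ∫⁻ y in Ioi x, ENNReal.ofReal (b x y * w y)
      = ∫⁻ x in Ioi 0, ∫⁻ y in Ioi x, g x y := by
        refine setLIntegral_congr_fun measurableSet_Ioi fun x hx => ?_
        rw [← lintegral_const_mul' _ _ ENNReal.ofReal_ne_top]
        refine lintegral_congr fun y => ?_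
        rw [← ENNReal.ofReal_mul (le_of_lt hx), ← mul_assoc,
          ENNReal.ofReal_mul (mul_nonneg (le_of_lt hx) (hb_nonneg x y))]
    _ = ∫⁻ y in Ioi 0, ∫⁻ x in Ioo 0 y, g x y := lintegral_Ioi_lintegral_Ioi_swap 0 hg
    _ = ∫⁻ y in Ioi 0, ENNReal.ofReal (y * w y) := by
        refine setLIntegral_congr_fun measurableSet_Ioi fun y hy => ?_
        rw [lintegral_mul_const' _ _ ENNReal.ofReal_ne_top, hmass y hy, ENNReal.ofReal_mul hy.le]

theorem fragOp_eq_toReal_lintegral_sub {a : ℝ → ℝ} {b : ℝ → ℝ → ℝ} {f : ℝ → ℝ}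
    (ha_meas : Measurable a) (ha_nonneg : ∀ x, 0 ≤ a x)
    (hb_meas : Measurable (Function.uncurry b)) (hb_nonneg : ∀ x y, 0 ≤ b x y)
    (hf_meas : Measurable f) (hf_nonneg : ∀ x, 0 ≤ f x) (x : ℝ) :
    fragOp a b f x
      = (∫⁻ y in Ioi x, ENNReal.ofReal (b x y * (a y * f y))).toReal - a x * f x := by
  have hrearrange : ∀ y, a y * b x y * f y = b x y * (a y * f y) := fun y => by ring
  have hmeas : Measurable fun y => b x y * (a y * f y) :=
    (hb_meas.comp measurable_prodMk_left).mul (ha_meas.mul hf_meas)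
  rw [fragOp, neg_add_eq_sub]
  simp_rw [hrearrange]
  rw [integral_eq_lintegral_of_nonneg_ae (ae_of_all _ fun y =>
    mul_nonneg (hb_nonneg x y) (mul_nonneg (ha_nonneg y) (hf_nonneg y))) hmeas.aestronglyMeasurable]

theorem stmt16_general (a : ℝ → ℝ) (b : ℝ → ℝ → ℝ) (f : ℝ → ℝ)
    (ha_meas : Measurable a) (ha_nonneg : ∀ x, 0 ≤ a x)
    (hb_meas : Measurable (Function.uncurry b))
    (hb_nonneg : ∀ x y, 0 ≤ b x y)
    (hb_mass : ∀ y : ℝ, 0 < y → ∫ x in Set.Ioo 0 y, x * b x y = y)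
    (hf_meas : Measurable f) (hf_nonneg : ∀ x, 0 ≤ f x)
    (hf_int : ∫⁻ y in Set.Ioi (0:ℝ), ENNReal.ofReal (a y * y * f y) < ∞) :
    ∫ x in Set.Ioi (0:ℝ), x * fragOp a b f x = 0 := by
  set G : ℝ → ℝ≥0∞ := fun x => ∫⁻ y in Ioi x, ENNReal.ofReal (b x y * (a y * f y))
  have hG : Measurable G := measurable_lintegral_Ioi
    (hb_meas.mul ((ha_meas.mul hf_meas).comp measurable_snd)).ennreal_ofReal
  have hgain : ∫⁻ x in Ioi 0, ENNReal.ofReal x * G x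
      = ∫⁻ y in Ioi 0, ENNReal.ofReal (a y * y * f y) := by
    refine (lintegral_mul_lintegral_Ioi_of_mass (w := fun y => a y * f y) hb_meas hb_nonneg
      hb_mass (ha_meas.mul hf_meas)).trans ?_
    exact lintegral_congr fun y => by ring_nf
  have hpointwise : ∀ x ∈ Ioi (0:ℝ), x * fragOp a b f x
      = (ENNReal.ofReal x * G x).toReal - (ENNReal.ofReal (a x * x * f x)).toReal := by
    intro x hx
    rw [fragOp_eq_toReal_lintegral_sub ha_meas ha_nonneg hb_meas hb_nonneg hf_meas hf_nonneg,
      ENNReal.toReal_mul, ENNReal.toReal_ofReal hx.le, ENNReal.toReal_ofReal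
        (mul_nonneg (mul_nonneg (ha_nonneg x) hx.le) (hf_nonneg x))]
    ring
  rw [setIntegral_congr_fun measurableSet_Ioi hpointwise]
  exact integral_toReal_sub_toReal_eq_zero (measurable_id.ennreal_ofReal.mul hG).aemeasurable
    ((ha_meas.mul measurable_id).mul hf_meas).ennreal_ofReal.aemeasurable hgain hf_int.ne

/-- the fragmentation operator conserves mass: `∫₀^∞ x (Ff)(x) dx = 0`. -/
theorem stmt16 (a : ℝ → ℝ) (b : ℝ → ℝ → ℝ) (f : ℝ → ℝ)
    (ha_meas : Measurable a) (ha_nonneg : ∀ x, 0 ≤ a x)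
    (hb_meas : Measurable (Function.uncurry b))
    (hb_nonneg : ∀ x y, 0 ≤ b x y)
    (hb_supp : ∀ y : ℝ, 0 < y → ∀ᵐ x ∂(volume : Measure ℝ), y < x → b x y = 0)
    (hb_mass : ∀ y : ℝ, 0 < y → ∫ x in Set.Ioo 0 y, x * b x y = y)
    (hf_meas : Measurable f) (hf_nonneg : ∀ x, 0 ≤ f x)
    (hf_int : ∫⁻ y in Set.Ioi (0:ℝ), ENNReal.ofReal (a y * y * f y) < ∞) :
    ∫ x in Set.Ioi (0:ℝ), x * fragOp a b f x = 0 :=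
  stmt16_general a b f ha_meas ha_nonneg hb_meas hb_nonneg hb_mass hf_meas hf_nonneg hf_int
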